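/- Let Θ ⊆ ℝ^d be convex and f : Θ → ℝ be ξ⁻¹-strongly convex on Θ for some ξ ∈ (0,∞), with target π = Z⁻¹ exp(−f). If the random walk Metropolis-Hastings kernel with Gaussian proposal N(θ, h I_d) is (ρ, M)-geometrically ergodic, then ρ ≥ 1 − (1 + h/ξ)^{−d/2}. -/

import Mathlib

/-!
From `θ` the RWMH chain stays at `θ` with probability at least `1 - A(θ)`, where `A` is the
acceptance probability, while the target has no atoms; hence `‖P^t(θ,·) - Π‖_TV ≥ (1 - A(θ))^t`,
and geometric ergodicity forces `ρ ≥ 1 - A(θ)` for every `θ ∈ Θ`. Near a `t ^ 2`-approximate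
minimiser `θ` of `f`, strong convexity gives `f θ' ≥ f θ + (1 - t) ‖θ' - θ‖² / (2ξ) - t`, so the
acceptance ratio is at most `e^t exp (-(1 - t) ‖θ' - θ‖² / (2ξ))`; integrating against the
Gaussian proposal gives `A(θ) ≤ e^t (1 + h (1 - t) / ξ)^{-d/2}`, and `t → 0` gives the bound.
That `f` is bounded below at all follows from its convexity and the integrability of `exp (-f)`.
-/

open MeasureTheory

/-- The Metropolis-Hastings acceptance function
`a_MH(θ,θ') = min(π(θ')q(θ',θ)/(π(θ)q(θ,θ')), 1)`, equal to `1` when `π(θ)q(θ,θ') = 0`. -/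
noncomputable def mhAcceptFn {α : Type*} (pi : α → ℝ) (q : α → α → ℝ) (θ θ' : α) : ℝ :=
  if 0 < pi θ * q θ θ' then min ((pi θ' * q θ' θ) / (pi θ * q θ θ')) 1 else 1

/-- The Metropolis-Hastings acceptance probability `A(θ) = ∫ a_MH(θ,θ') q(θ,θ') dλ(θ')`. -/
noncomputable def mhAcceptProb {α : Type*} [MeasurableSpace α] (lam : Measure α)
    (pi : α → ℝ) (q : α → α → ℝ) (θ : α) : ℝ :=
  ∫ θ', mhAcceptFn pi q θ θ' * q θ θ' ∂lam

/-- The Metropolis-Hastings Markov kernel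
`P(θ,B) = ∫_B a_MH(θ,θ') q(θ,θ') dλ(θ') + δ_θ(B)(1 − A(θ))`. -/
noncomputable def mhKernel {α : Type*} [MeasurableSpace α] (lam : Measure α)
    (pi : α → ℝ) (q : α → α → ℝ) (θ : α) : Measure α :=
  lam.withDensity (fun θ' => ENNReal.ofReal (mhAcceptFn pi q θ θ' * q θ θ')) +
    (ENNReal.ofReal (1 - mhAcceptProb lam pi q θ)) • Measure.dirac θ

/-- The `t`-step iterate `P^t(θ,·)` of a Markov kernel, with `P^0(θ,·) = δ_θ`. -/
noncomputable def iterK {Ω : Type*} [MeasurableSpace Ω] (P : Ω → Measure Ω) :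
    ℕ → Ω → Measure Ω
  | 0 => fun θ => Measure.dirac θ
  | (t + 1) => fun θ => (iterK P t θ).bind P

/-- Total variation distance:
`‖μ − ν‖_TV = sup { ∫ f dμ − ∫ f dν : f measurable, 0 ≤ f ≤ 1 }`. -/
noncomputable def tvDist {Ω : Type*} [MeasurableSpace Ω] (μ ν : Measure Ω) : ℝ :=
  ⨆ f : {f : Ω → ℝ // Measurable f ∧ ∀ x, f x ∈ Set.Icc (0:ℝ) 1},
    (∫ x, f.1 x ∂μ - ∫ x, f.1 x ∂ν)

/-- The Gaussian random walk proposal density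
`q(θ,θ') = (2πh)^{−d/2} exp(−‖θ'−θ‖₂²/(2h))` of `N(θ, h I_d)`. -/
noncomputable def rwProposal (h : ℝ) (d : ℕ) (θ θ' : Fin d → ℝ) : ℝ :=
  (2 * Real.pi * h) ^ (-(d : ℝ) / 2) * Real.exp (-(∑ i, (θ' i - θ i) ^ 2) / (2 * h))

/-- The log-concave target density `π = Z⁻¹ exp(−f)` on `Θ` (and `0` off `Θ`), where
`Z = ∫_Θ exp(−f)`. -/
noncomputable def logConcaveTarget {d : ℕ} (Θ : Set (Fin d → ℝ))
    (f : (Fin d → ℝ) → ℝ) : (Fin d → ℝ) → ℝ :=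
  Θ.indicator (fun θ => Real.exp (-f θ) / ∫ x in Θ, Real.exp (-f x))

open Set Filter

section MarkovChain

variable {α : Type*} [MeasurableSpace α]

lemma iterK_isProbabilityMeasure {P : α → Measure α} (hP : Measurable P)
    (hprob : ∀ θ, IsProbabilityMeasure (P θ)) : ∀ t θ, IsProbabilityMeasure (iterK P t θ)
  | 0, θ => by rw [iterK]; infer_instance
  | t + 1, θ => by
    have := iterK_isProbabilityMeasure hP hprob t θ
    exact isProbabilityMeasure_bind hP.aemeasurable (ae_of_all _ hprob)

lemma pow_measure_singleton_le_iterK [MeasurableSingletonClass α] {P : α → Measure α}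
    (hP : Measurable P) (θ : α) : ∀ t : ℕ, P θ {θ} ^ t ≤ iterK P t θ {θ}
  | 0 => by simp [iterK]
  | t + 1 => by
    rw [iterK, Measure.bind_apply (measurableSet_singleton θ) hP.aemeasurable, pow_succ]
    calc P θ {θ} ^ t * P θ {θ} ≤ iterK P t θ {θ} * P θ {θ} := by
          gcongr; exact pow_measure_singleton_le_iterK hP θ t
      _ = ∫⁻ x in {θ}, P x {θ} ∂(iterK P t θ) := by rw [lintegral_singleton, mul_comm]
      _ ≤ ∫⁻ x, P x {θ} ∂(iterK P t θ) := setLIntegral_le_lintegral _ _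

lemma measureReal_sub_le_tvDist (μ ν : Measure α) [IsFiniteMeasure μ] {s : Set α}
    (hs : MeasurableSet s) : μ.real s - ν.real s ≤ tvDist μ ν := by
  have hbdd : BddAbove (range fun g : {g : α → ℝ // Measurable g ∧ ∀ x, g x ∈ Icc (0:ℝ) 1} =>
      ∫ x, g.1 x ∂μ - ∫ x, g.1 x ∂ν) := by
    refine ⟨μ.real univ, ?_⟩
    rintro _ ⟨⟨g, -, hg⟩, rfl⟩
    have hμ : ∫ x, g x ∂μ ≤ ∫ _, (1:ℝ) ∂μ :=
      integral_mono_of_nonneg (ae_of_all _ fun x => (hg x).1) (integrable_const 1)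
        (ae_of_all _ fun x => (hg x).2)
    have hν : 0 ≤ ∫ x, g x ∂ν := integral_nonneg fun x => (hg x).1
    simp only [integral_const, smul_eq_mul, mul_one] at hμ
    linarith
  have hind : ∀ x, s.indicator (1 : α → ℝ) x ∈ Icc (0:ℝ) 1 := fun x => by
    by_cases hx : x ∈ s <;> simp [hx]
  refine le_ciSup_of_le hbdd ⟨s.indicator 1, measurable_one.indicator hs, hind⟩ ?_
  simp only [integral_indicator_one hs, le_refl]

lemma le_of_pow_le_mul_pow {σ ρ M : ℝ} (hρ : 0 < ρ) (h : ∀ t : ℕ, 1 ≤ t → σ ^ t ≤ M * ρ ^ t) :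
    σ ≤ ρ := by
  by_contra! hlt
  have hgrow : Tendsto (fun t : ℕ => (σ / ρ) ^ t) atTop atTop :=
    tendsto_pow_atTop_atTop_of_one_lt ((one_lt_div hρ).2 hlt)
  obtain ⟨t, hMt, ht⟩ := ((hgrow.eventually_gt_atTop M).and (eventually_ge_atTop 1)).exists
  have : M * ρ ^ t < σ ^ t := by
    rw [div_pow, lt_div_iff₀ (pow_pos hρ t)] at hMt
    exact hMt
  linarith [h t ht]

theorem measureReal_singleton_le_of_tvDist_iterK_le [MeasurableSingletonClass α]
    {P : α → Measure α} (hP : Measurable P) (hprob : ∀ θ, IsProbabilityMeasure (P θ))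
    {ν : Measure α} {θ : α} (hν : ν {θ} = 0) {M ρ : ℝ} (hρ : 0 < ρ)
    (hge : ∀ t : ℕ, 1 ≤ t → tvDist (iterK P t θ) ν ≤ M * ρ ^ t) :
    (P θ).real {θ} ≤ ρ := by
  refine le_of_pow_le_mul_pow (M := M) hρ fun t ht => ?_
  have := iterK_isProbabilityMeasure hP hprob t θ
  calc (P θ).real {θ} ^ t = (P θ {θ} ^ t).toReal := by rw [measureReal_def, ENNReal.toReal_pow]
    _ ≤ (iterK P t θ).real {θ} - ν.real {θ} := by
        rw [measureReal_def, measureReal_def, hν, ENNReal.toReal_zero, sub_zero]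
        exact ENNReal.toReal_mono (measure_ne_top _ _) (pow_measure_singleton_le_iterK hP θ t)
    _ ≤ tvDist (iterK P t θ) ν := measureReal_sub_le_tvDist _ _ (measurableSet_singleton θ)
    _ ≤ M * ρ ^ t := hge t ht

end MarkovChain

section MetropolisHastings

variable {α : Type*} {pi : α → ℝ} {q : α → α → ℝ}

lemma mhAcceptFn_nonneg (hpi : ∀ x, 0 ≤ pi x) (hq : ∀ x y, 0 ≤ q x y) (θ θ' : α) :
    0 ≤ mhAcceptFn pi q θ θ' := by
  unfold mhAcceptFn
  split_ifs with hpos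
  · exact le_min (div_nonneg (mul_nonneg (hpi _) (hq _ _)) hpos.le) zero_le_one
  · exact zero_le_one

lemma mhAcceptFn_le_one (θ θ' : α) : mhAcceptFn pi q θ θ' ≤ 1 := by
  unfold mhAcceptFn
  split_ifs
  exacts [min_le_right _ _, le_rfl]

lemma mhAcceptFn_le_div (hq : ∀ x y, q x y = q y x) {θ θ' : α}
    (hpos : 0 < pi θ * q θ θ') : mhAcceptFn pi q θ θ' ≤ pi θ' / pi θ := by
  have hqθ : q θ θ' ≠ 0 := by rintro h0; simp [h0] at hpos
  rw [mhAcceptFn, if_pos hpos, hq θ' θ, mul_div_mul_right _ _ hqθ]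
  exact min_le_left _ _

variable [MeasurableSpace α] {lam : Measure α}

lemma measurable_mhAcceptFn_mul (hpi : Measurable pi) (hq : Measurable (Function.uncurry q)) :
    Measurable fun p : α × α => mhAcceptFn pi q p.1 p.2 * q p.1 p.2 := by
  have hfwd : Measurable fun p : α × α => pi p.1 * q p.1 p.2 := (hpi.comp measurable_fst).mul hq
  have hbwd : Measurable fun p : α × α => pi p.2 * q p.2 p.1 :=
    (hpi.comp measurable_snd).mul (hq.comp measurable_swap)
  refine Measurable.mul ?_ hq
  exact Measurable.ite (measurableSet_lt measurable_const hfwd)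
    ((hbwd.div hfwd).min measurable_const) measurable_const

lemma integrable_mhAcceptFn_mul (hpi : ∀ x, 0 ≤ pi x) (hq : ∀ x y, 0 ≤ q x y)
    (hpim : Measurable pi) (hqm : Measurable (Function.uncurry q)) {θ : α}
    (hqint : Integrable (q θ) lam) :
    Integrable (fun θ' => mhAcceptFn pi q θ θ' * q θ θ') lam := by
  refine hqint.mono' ((measurable_mhAcceptFn_mul hpim hqm).comp
    measurable_prodMk_left).aestronglyMeasurable (ae_of_all _ fun θ' => ?_)
  rw [Real.norm_eq_abs, abs_of_nonneg (mul_nonneg (mhAcceptFn_nonneg hpi hq θ θ') (hq θ θ'))]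
  exact mul_le_of_le_one_left (hq θ θ') (mhAcceptFn_le_one θ θ')

lemma mhAcceptProb_le_one (hpi : ∀ x, 0 ≤ pi x) (hq : ∀ x y, 0 ≤ q x y)
    (hpim : Measurable pi) (hqm : Measurable (Function.uncurry q)) {θ : α}
    (hq1 : ∫ θ', q θ θ' ∂lam = 1) : mhAcceptProb lam pi q θ ≤ 1 := by
  have hqint : Integrable (q θ) lam := Integrable.of_integral_ne_zero (by simp [hq1])
  calc mhAcceptProb lam pi q θ ≤ ∫ θ', q θ θ' ∂lam :=
        integral_mono (integrable_mhAcceptFn_mul hpi hq hpim hqm hqint) hqint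
          fun θ' => mul_le_of_le_one_left (hq θ θ') (mhAcceptFn_le_one θ θ')
    _ = 1 := hq1

lemma mhKernel_isProbabilityMeasure (hpi : ∀ x, 0 ≤ pi x) (hq : ∀ x y, 0 ≤ q x y)
    (hpim : Measurable pi) (hqm : Measurable (Function.uncurry q)) {θ : α}
    (hq1 : ∫ θ', q θ θ' ∂lam = 1) : IsProbabilityMeasure (mhKernel lam pi q θ) := by
  have hqint : Integrable (q θ) lam := Integrable.of_integral_ne_zero (by simp [hq1])
  have hA0 : 0 ≤ mhAcceptProb lam pi q θ :=
    integral_nonneg fun θ' => mul_nonneg (mhAcceptFn_nonneg hpi hq θ θ') (hq θ θ')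
  have hA1 := mhAcceptProb_le_one hpi hq hpim hqm hq1
  constructor
  rw [mhKernel, Measure.add_apply, withDensity_apply _ MeasurableSet.univ, Measure.restrict_univ,
    ← ofReal_integral_eq_lintegral_ofReal (integrable_mhAcceptFn_mul hpi hq hpim hqm hqint)
      (ae_of_all _ fun θ' => mul_nonneg (mhAcceptFn_nonneg hpi hq θ θ') (hq θ θ')),
    Measure.smul_apply, measure_univ, smul_eq_mul, mul_one, ← mhAcceptProb,
    ← ENNReal.ofReal_add hA0 (sub_nonneg.2 hA1), add_sub_cancel, ENNReal.ofReal_one]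

lemma measurable_mhKernel [SFinite lam] (hpi : Measurable pi)
    (hq : Measurable (Function.uncurry q)) : Measurable (mhKernel lam pi q) := by
  refine Measure.measurable_of_measurable_coe _ fun s hs => ?_
  simp only [mhKernel, Measure.add_apply, withDensity_apply _ hs, Measure.smul_apply,
    Measure.dirac_apply' _ hs, smul_eq_mul]
  have hA : Measurable (mhAcceptProb lam pi q) :=
    ((measurable_mhAcceptFn_mul hpi hq).stronglyMeasurable.integral_prod_right'
      (ν := lam)).measurable
  exact (measurable_mhAcceptFn_mul hpi hq).ennreal_ofReal.lintegral_prod_right'.add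
    ((measurable_const.sub hA).ennreal_ofReal.mul (measurable_one.indicator hs))

lemma one_sub_mhAcceptProb_le_measureReal_singleton (θ : α)
    [IsFiniteMeasure (mhKernel lam pi q θ)] :
    1 - mhAcceptProb lam pi q θ ≤ (mhKernel lam pi q θ).real {θ} := by
  refine (ENNReal.ofReal_le_iff_le_toReal (measure_ne_top _ _)).1 ?_
  rw [mhKernel, Measure.add_apply, Measure.smul_apply, smul_eq_mul,
    Measure.dirac_apply_of_mem (mem_singleton θ), mul_one]
  exact le_add_self

end MetropolisHastings

section GaussianProposal

variable {d : ℕ} {h : ℝ}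

lemma rwProposal_pos (hh : 0 < h) (θ θ' : Fin d → ℝ) : 0 < rwProposal h d θ θ' := by
  unfold rwProposal; positivity

lemma rwProposal_comm (θ θ' : Fin d → ℝ) : rwProposal h d θ θ' = rwProposal h d θ' θ := by
  simp only [rwProposal, ← neg_sub (θ _), neg_sq]

lemma measurable_rwProposal : Measurable (Function.uncurry (rwProposal h d)) := by
  unfold rwProposal Function.uncurry
  fun_prop

lemma exp_mul_rwProposal_eq_prod (hh : 0 < h) (c : ℝ) (θ θ' : Fin d → ℝ) :
    Real.exp (-(c * ∑ i, (θ' i - θ i) ^ 2)) * rwProposal h d θ θ' =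
      (2 * Real.pi * h) ^ (-(d : ℝ) / 2) *
        ∏ i, Real.exp (-(c + 1 / (2 * h)) * (θ' i - θ i) ^ 2) := by
  have hexp : ∑ i, -(c + 1 / (2 * h)) * (θ' i - θ i) ^ 2 =
      -(c * ∑ i, (θ' i - θ i) ^ 2) + -(∑ i, (θ' i - θ i) ^ 2) / (2 * h) := by
    rw [← Finset.mul_sum]
    field_simp
    ring
  rw [rwProposal, ← Real.exp_sum, hexp, Real.exp_add]
  ring

lemma integrable_exp_mul_rwProposal (hh : 0 < h) {c : ℝ} (hc : 0 ≤ c) (θ : Fin d → ℝ) :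
    Integrable fun θ' => Real.exp (-(c * ∑ i, (θ' i - θ i) ^ 2)) * rwProposal h d θ θ' := by
  have hb : 0 < c + 1 / (2 * h) := by positivity
  refine ((Integrable.fintype_prod_dep fun i =>
    (integrable_exp_neg_mul_sq hb).comp_sub_right (θ i)).const_mul
      ((2 * Real.pi * h) ^ (-(d : ℝ) / 2))).congr (ae_of_all _ fun θ' => ?_)
  exact (exp_mul_rwProposal_eq_prod hh c θ θ').symm

lemma integral_exp_mul_rwProposal (hh : 0 < h) {c : ℝ} (hc : 0 ≤ c) (θ : Fin d → ℝ) :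
    ∫ θ', Real.exp (-(c * ∑ i, (θ' i - θ i) ^ 2)) * rwProposal h d θ θ' =
      (1 + 2 * h * c) ^ (-(d : ℝ) / 2) := by
  obtain ⟨b, hb_def⟩ : ∃ b, b = c + 1 / (2 * h) := ⟨_, rfl⟩
  have hb : 0 < b := by rw [hb_def]; positivity
  have hcoord : ∀ i : Fin d, ∫ x : ℝ, Real.exp (-b * (x - θ i) ^ 2) = (Real.pi / b) ^ (1 / 2 : ℝ) :=
    fun i => by
      rw [integral_sub_right_eq_self (fun x => Real.exp (-b * x ^ 2)), integral_gaussian,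
        Real.sqrt_eq_rpow]
  have hratio : 1 + 2 * h * c = (2 * Real.pi * h) * (Real.pi / b)⁻¹ := by
    rw [hb_def]; field_simp; ring
  simp_rw [exp_mul_rwProposal_eq_prod hh c θ, ← hb_def]
  rw [integral_const_mul,
    integral_fintype_prod_volume_eq_prod (fun i x => Real.exp (-b * (x - θ i) ^ 2)),
    Finset.prod_congr rfl fun i _ => hcoord i, Finset.prod_const, Finset.card_univ,
    Fintype.card_fin, ← Real.rpow_mul_natCast (by positivity), hratio,
    Real.mul_rpow (x := 2 * Real.pi * h) (by positivity) (by positivity),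
    Real.inv_rpow (by positivity),
    ← Real.rpow_neg (by positivity)]
  ring_nf

lemma integral_rwProposal (hh : 0 < h) (θ : Fin d → ℝ) : ∫ θ', rwProposal h d θ θ' = 1 := by
  simpa using integral_exp_mul_rwProposal (d := d) hh le_rfl θ

end GaussianProposal

section LogConcaveTarget

variable {d : ℕ} {h : ℝ} {Θ : Set (Fin d → ℝ)} {f : (Fin d → ℝ) → ℝ}

lemma logConcaveTarget_nonneg (x : Fin d → ℝ) : 0 ≤ logConcaveTarget Θ f x :=
  indicator_nonneg (fun _ _ => div_nonneg (Real.exp_pos _).le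
    (integral_nonneg fun _ => (Real.exp_pos _).le)) x

lemma logConcaveTarget_pos (hZ : 0 < ∫ x in Θ, Real.exp (-f x)) {x : Fin d → ℝ} (hx : x ∈ Θ) :
    0 < logConcaveTarget Θ f x := by
  rw [logConcaveTarget, indicator_of_mem hx]
  positivity

lemma measurable_logConcaveTarget (hf : Measurable f) (hΘ : MeasurableSet Θ) :
    Measurable (logConcaveTarget Θ f) :=
  (hf.neg.exp.div_const _).indicator hΘ

lemma logConcaveTarget_div_le (hZ : ∫ x in Θ, Real.exp (-f x) ≠ 0) {θ : Fin d → ℝ} (hθ : θ ∈ Θ)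
    {g : (Fin d → ℝ) → ℝ} (hg : ∀ θ' ∈ Θ, f θ - f θ' ≤ g θ') (θ' : Fin d → ℝ) :
    logConcaveTarget Θ f θ' / logConcaveTarget Θ f θ ≤ Real.exp (g θ') := by
  by_cases hθ' : θ' ∈ Θ
  · rw [logConcaveTarget, indicator_of_mem hθ, indicator_of_mem hθ', div_div_div_cancel_right₀ hZ,
      ← Real.exp_sub, sub_neg_eq_add, neg_add_eq_sub]
    exact Real.exp_le_exp.2 (hg θ' hθ')
  · rw [logConcaveTarget, indicator_of_notMem hθ', zero_div]
    exact (Real.exp_pos _).le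

lemma mhAcceptProb_logConcaveTarget_le (hh : 0 < h) (hZ : 0 < ∫ x in Θ, Real.exp (-f x))
    {θ : Fin d → ℝ} (hθ : θ ∈ Θ) {c E : ℝ} (hc : 0 ≤ c)
    (hgrowth : ∀ θ' ∈ Θ, f θ + c * ∑ i, (θ' i - θ i) ^ 2 - E ≤ f θ') :
    mhAcceptProb volume (logConcaveTarget Θ f) (rwProposal h d) θ ≤
      Real.exp E * (1 + 2 * h * c) ^ (-(d : ℝ) / 2) := by
  have hq := rwProposal_pos (d := d) hh
  have hpointwise : ∀ θ', mhAcceptFn (logConcaveTarget Θ f) (rwProposal h d) θ θ' *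
      rwProposal h d θ θ' ≤
        Real.exp E * (Real.exp (-(c * ∑ i, (θ' i - θ i) ^ 2)) * rwProposal h d θ θ') := by
    intro θ'
    rw [← mul_assoc, ← Real.exp_add]
    refine mul_le_mul_of_nonneg_right ?_ (hq θ θ').le
    refine (mhAcceptFn_le_div rwProposal_comm
      (mul_pos (logConcaveTarget_pos hZ hθ) (hq θ θ'))).trans
      (logConcaveTarget_div_le (g := fun θ' => E + -(c * ∑ i, (θ' i - θ i) ^ 2)) hZ.ne' hθ
        (fun θ' hθ' => ?_) θ')
    linarith [hgrowth θ' hθ']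
  calc mhAcceptProb volume (logConcaveTarget Θ f) (rwProposal h d) θ
      ≤ ∫ θ', Real.exp E * (Real.exp (-(c * ∑ i, (θ' i - θ i) ^ 2)) * rwProposal h d θ θ') :=
        integral_mono_of_nonneg (ae_of_all _ fun θ' => mul_nonneg
            (mhAcceptFn_nonneg logConcaveTarget_nonneg (fun x y => (hq x y).le) θ θ') (hq θ θ').le)
          ((integrable_exp_mul_rwProposal hh hc θ).const_mul _) (ae_of_all _ hpointwise)
    _ = Real.exp E * (1 + 2 * h * c) ^ (-(d : ℝ) / 2) := by
        rw [integral_const_mul, integral_exp_mul_rwProposal hh hc θ]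

end LogConcaveTarget

section StrongConvexity

variable {ι : Type*} [Fintype ι] {s : Set (ι → ℝ)} {f : (ι → ℝ) → ℝ} {ξ : ℝ}

lemma sum_sq_add_smul (x y : ι → ℝ) {a b : ℝ} (hab : a + b = 1) :
    ∑ i, (a • x + b • y) i ^ 2 =
      a * ∑ i, x i ^ 2 + b * ∑ i, y i ^ 2 - a * b * ∑ i, (y i - x i) ^ 2 := by
  obtain rfl : b = 1 - a := by linarith
  simp only [Pi.add_apply, Pi.smul_apply, smul_eq_mul, Finset.mul_sum, ← Finset.sum_add_distrib,
    ← Finset.sum_sub_distrib]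
  exact Finset.sum_congr rfl fun i _ => by ring

lemma apply_add_smul_le_of_convexOn_sub_sum_sq
    (hsc : ConvexOn ℝ s fun θ => f θ - (∑ i, θ i ^ 2) / (2 * ξ)) {x y : ι → ℝ} (hx : x ∈ s)
    (hy : y ∈ s) {a b : ℝ} (ha : 0 ≤ a) (hb : 0 ≤ b) (hab : a + b = 1) :
    f (a • x + b • y) ≤ a * f x + b * f y - a * b * (∑ i, (y i - x i) ^ 2) / (2 * ξ) := by
  have hcomb := hsc.2 hx hy ha hb hab
  simp only [smul_eq_mul, sum_sq_add_smul x y hab] at hcomb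
  linear_combination hcomb

lemma convexOn_of_convexOn_sub_sum_sq (hξ : 0 < ξ) (hs : Convex ℝ s)
    (hsc : ConvexOn ℝ s fun θ => f θ - (∑ i, θ i ^ 2) / (2 * ξ)) : ConvexOn ℝ s f := by
  refine ⟨hs, fun x hx y hy a b ha hb hab => ?_⟩
  have hgap : 0 ≤ a * b * (∑ i, (y i - x i) ^ 2) / (2 * ξ) := by positivity
  have := apply_add_smul_le_of_convexOn_sub_sum_sq hsc hx hy ha hb hab
  simp only [smul_eq_mul]
  linarith

/-- The witness is any `t ^ 2`-approximate minimiser of `f`; an exact minimiser need not exist. -/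
lemma exists_forall_add_sum_sq_le (hs : Convex ℝ s) (hne : s.Nonempty)
    (hsc : ConvexOn ℝ s fun θ => f θ - (∑ i, θ i ^ 2) / (2 * ξ)) (hbdd : BddBelow (f '' s))
    {t : ℝ} (ht : t ∈ Ioo 0 1) :
    ∃ θ ∈ s, ∀ θ' ∈ s, f θ + (1 - t) / (2 * ξ) * ∑ i, (θ' i - θ i) ^ 2 - t ≤ f θ' := by
  obtain ⟨ht0, ht1⟩ := ht
  obtain ⟨_, ⟨θ, hθ, rfl⟩, hθmin⟩ := Real.lt_sInf_add_pos (hne.image f) (mul_pos ht0 ht0)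
  refine ⟨θ, hθ, fun θ' hθ' => le_of_mul_le_mul_left ?_ ht0⟩
  have hinf : sInf (f '' s) ≤ f ((1 - t) • θ + t • θ') :=
    csInf_le hbdd (mem_image_of_mem f (hs hθ hθ' (by linarith) ht0.le (by ring)))
  have hconv := apply_add_smul_le_of_convexOn_sub_sum_sq hsc hθ hθ' (by linarith) ht0.le
    (by ring : 1 - t + t = 1)
  linear_combination hinf + hconv + hθmin

end StrongConvexity

section BoundedBelow

variable {E : Type*} [NormedAddCommGroup E] [NormedSpace ℝ E] [FiniteDimensional ℝ E]
  [MeasurableSpace E] [BorelSpace E] {s : Set E} {f : E → ℝ}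

lemma Convex.interior_nonempty_of_measure_ne_zero (μ : Measure E) [μ.IsAddHaarMeasure]
    (hs : Convex ℝ s) (hμ : μ s ≠ 0) : (interior s).Nonempty := by
  by_contra hemp
  rw [not_nonempty_iff_eq_empty] at hemp
  refine hμ (measure_mono_null (fun x hx => ?_) (hs.addHaar_frontier μ))
  rw [frontier, hemp, sdiff_empty]
  exact subset_closure hx

omit [MeasurableSpace E] [BorelSpace E] in
lemma ConvexOn.exists_closedBall_subset_forall_le (hf : ConvexOn ℝ s f)
    (hs : (interior s).Nonempty) :
    ∃ z r C, 0 < r ∧ Metric.closedBall z r ⊆ s ∧ ∀ x ∈ Metric.closedBall z r, f x ≤ C := by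
  obtain ⟨z, hz⟩ := hs
  obtain ⟨ε, hε, hball⟩ := Metric.isOpen_iff.1 isOpen_interior z hz
  have hsub : Metric.closedBall z (ε / 2) ⊆ interior s :=
    (Metric.closedBall_subset_ball (by linarith)).trans hball
  have hcont : ContinuousOn f (interior s) :=
    (hf.subset interior_subset hf.1.interior).continuousOn isOpen_interior
  obtain ⟨C, hC⟩ := (isCompact_closedBall z (ε / 2)).bddAbove_image (hcont.mono hsub)
  exact ⟨z, ε / 2, C, by positivity, hsub.trans interior_subset,
    fun x hx => hC (mem_image_of_mem f hx)⟩

omit [FiniteDimensional ℝ E] [MeasurableSpace E] [BorelSpace E] in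
/-- Every `y` near the midpoint of `z` and `x₀` is the midpoint of `x₀` and a point of the ball
around `z`. -/
lemma ConvexOn.le_of_mem_closedBall_midpoint (hf : ConvexOn ℝ s f) {z x₀ : E} {r C : ℝ}
    (hball : Metric.closedBall z r ⊆ s) (hC : ∀ x ∈ Metric.closedBall z r, f x ≤ C)
    (hx₀ : x₀ ∈ s) {y : E} (hy : y ∈ Metric.closedBall ((2⁻¹ : ℝ) • (z + x₀)) (r / 2)) :
    y ∈ s ∧ f y ≤ (C + f x₀) / 2 := by
  have hw : (2 : ℝ) • y - x₀ ∈ Metric.closedBall z r := by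
    rw [Metric.mem_closedBall, dist_eq_norm] at hy ⊢
    rw [show (2 : ℝ) • y - x₀ - z = (2 : ℝ) • (y - (2⁻¹ : ℝ) • (z + x₀)) by module, norm_smul,
      Real.norm_two]
    linarith
  have hy_eq : (2⁻¹ : ℝ) • ((2 : ℝ) • y - x₀) + (2⁻¹ : ℝ) • x₀ = y := by module
  have hhalf : (0 : ℝ) ≤ 2⁻¹ := by norm_num
  have hsum : (2⁻¹ : ℝ) + 2⁻¹ = 1 := by norm_num
  refine ⟨hy_eq ▸ hf.1 (hball hw) hx₀ hhalf hhalf hsum, ?_⟩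
  have := hf.2 (hball hw) hx₀ hhalf hhalf hsum
  rw [hy_eq, smul_eq_mul, smul_eq_mul] at this
  linarith [hC _ hw]

/-- Each `x₀ ∈ s` yields a ball of fixed volume on which `f ≤ (C + f x₀) / 2`, so `∫ exp (-f)`
bounds `exp (-f x₀ / 2)` from above. -/
lemma ConvexOn.bddBelow_image_of_integrableOn_exp_neg (μ : Measure E) [μ.IsAddHaarMeasure]
    (hf : ConvexOn ℝ s f) (hint : IntegrableOn (fun x => Real.exp (-f x)) s μ)
    (hZ : 0 < ∫ x in s, Real.exp (-f x) ∂μ) : BddBelow (f '' s) := by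
  have hμ : μ s ≠ 0 := fun h0 => by simp [Measure.restrict_eq_zero.2 h0] at hZ
  obtain ⟨z, r, C, hr, hball, hC⟩ :=
    hf.exists_closedBall_subset_forall_le (hf.1.interior_nonempty_of_measure_ne_zero μ hμ)
  set κ := μ.real (Metric.closedBall (0 : E) (r / 2))
  have hκ : 0 < κ := ENNReal.toReal_pos
    (Metric.measure_closedBall_pos μ _ (by positivity)).ne' measure_closedBall_lt_top.ne
  refine ⟨-C - 2 * Real.log ((∫ x in s, Real.exp (-f x) ∂μ) / κ), ?_⟩
  rintro _ ⟨x₀, hx₀, rfl⟩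
  set B := Metric.closedBall ((2⁻¹ : ℝ) • (z + x₀)) (r / 2)
  have hmid : ∀ y ∈ B, y ∈ s ∧ f y ≤ (C + f x₀) / 2 := fun y hy =>
    hf.le_of_mem_closedBall_midpoint hball hC hx₀ hy
  have hlow : Real.exp (-(C + f x₀) / 2) * κ ≤ ∫ x in s, Real.exp (-f x) ∂μ :=
    calc Real.exp (-(C + f x₀) / 2) * κ = ∫ _ in B, Real.exp (-(C + f x₀) / 2) ∂μ := by
          rw [setIntegral_const, smul_eq_mul, Measure.addHaar_real_closedBall_center, mul_comm]
      _ ≤ ∫ x in B, Real.exp (-f x) ∂μ :=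
          setIntegral_mono_on (integrableOn_const measure_closedBall_lt_top.ne)
            (hint.mono_set fun y hy => (hmid y hy).1) measurableSet_closedBall
            fun y hy => Real.exp_le_exp.2 (by linarith [(hmid y hy).2])
      _ ≤ ∫ x in s, Real.exp (-f x) ∂μ :=
          setIntegral_mono_set hint (ae_of_all _ fun _ => (Real.exp_pos _).le)
            (Eventually.of_forall fun y hy => (hmid y hy).1)
  have := (Real.le_log_iff_exp_le (div_pos hZ hκ)).2 ((le_div_iff₀ hκ).2 hlow)
  linarith

end BoundedBelow

lemma le_of_forall_one_sub_exp_mul_rpow_le {d : ℕ} {h ξ ρ : ℝ} (hh : 0 < h) (hξ : 0 < ξ)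
    (hbound : ∀ t ∈ Ioo (0 : ℝ) 1,
      1 - Real.exp t * (1 + 2 * h * ((1 - t) / (2 * ξ))) ^ (-(d : ℝ) / 2) ≤ ρ) :
    1 - (1 + h / ξ) ^ (-(d : ℝ) / 2) ≤ ρ := by
  have hcont : ContinuousAt
      (fun t => 1 - Real.exp t * (1 + 2 * h * ((1 - t) / (2 * ξ))) ^ (-(d : ℝ) / 2)) 0 := by
    refine continuousAt_const.sub (Real.continuous_exp.continuousAt.mul ?_)
    exact ContinuousAt.rpow_const (by fun_prop) (Or.inl (by positivity))
  have hval : 1 - Real.exp 0 * (1 + 2 * h * ((1 - 0) / (2 * ξ))) ^ (-(d : ℝ) / 2) =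
      1 - (1 + h / ξ) ^ (-(d : ℝ) / 2) := by
    rw [Real.exp_zero, one_mul, sub_zero, mul_one_div, mul_div_mul_left _ _ two_ne_zero]
  refine le_of_tendsto (hval ▸ hcont.tendsto.mono_left (nhdsWithin_le_nhds (s := Ioi 0))) ?_
  filter_upwards [Ioo_mem_nhdsGT zero_lt_one] using hbound

theorem rwmh_strongly_convex_geometric_rate_lower_bound_general
    {d : ℕ} (hd : 0 < d) (h ξ : ℝ) (hh : 0 < h) (hξ : 0 < ξ)
    (Θ : Set (Fin d → ℝ)) (hΘne : Θ.Nonempty) (hΘconv : Convex ℝ Θ)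
    (hΘmeas : MeasurableSet Θ)
    (f : (Fin d → ℝ) → ℝ) (hfm : Measurable f)
    (hsc : ConvexOn ℝ Θ (fun θ => f θ - (∑ i, θ i ^ 2) / (2 * ξ)))
    (hfint : IntegrableOn (fun θ => Real.exp (-f θ)) Θ volume)
    (hZ : 0 < ∫ x in Θ, Real.exp (-f x))
    (ρ : ℝ) (hρ : ρ ∈ Set.Ioo (0:ℝ) 1)
    (Mf : (Fin d → ℝ) → ℝ)
    (hge : ∀ θ ∈ Θ, ∀ t : ℕ, 1 ≤ t →
      tvDist
          (iterK (mhKernel volume (logConcaveTarget Θ f) (rwProposal h d)) t θ)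
          (volume.withDensity (fun x => ENNReal.ofReal (logConcaveTarget Θ f x))) ≤
        Mf θ * ρ ^ t) :
    1 - (1 + h / ξ) ^ (-(d : ℝ) / 2) ≤ ρ := by
  have hq0 : ∀ x y, 0 ≤ rwProposal h d x y := fun x y => (rwProposal_pos hh x y).le
  have hπm := measurable_logConcaveTarget hfm hΘmeas
  have hprob (θ : Fin d → ℝ) :
      IsProbabilityMeasure (mhKernel volume (logConcaveTarget Θ f) (rwProposal h d) θ) :=
    mhKernel_isProbabilityMeasure logConcaveTarget_nonneg hq0 hπm measurable_rwProposal
      (integral_rwProposal hh θ)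
  have : Nonempty (Fin d) := ⟨⟨0, hd⟩⟩
  have hrate : ∀ θ ∈ Θ, 1 - mhAcceptProb volume (logConcaveTarget Θ f) (rwProposal h d) θ ≤ ρ :=
    fun θ hθ => (one_sub_mhAcceptProb_le_measureReal_singleton θ).trans
      (measureReal_singleton_le_of_tvDist_iterK_le (measurable_mhKernel hπm measurable_rwProposal)
        hprob (withDensity_absolutelyContinuous _ _ (measure_singleton θ)) hρ.1 (hge θ hθ))
  have hbdd : BddBelow (f '' Θ) :=
    (convexOn_of_convexOn_sub_sum_sq hξ hΘconv hsc).bddBelow_image_of_integrableOn_exp_neg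
      volume hfint hZ
  refine le_of_forall_one_sub_exp_mul_rpow_le hh hξ fun t ht => ?_
  obtain ⟨θ, hθ, hgrowth⟩ := exists_forall_add_sum_sq_le hΘconv hΘne hsc hbdd ht
  have hc : 0 ≤ (1 - t) / (2 * ξ) := div_nonneg (by linarith [ht.2]) (by positivity)
  linarith [hrate θ hθ, mhAcceptProb_logConcaveTarget_le hh hZ hθ hc hgrowth]

/-- Corollary 3: for RWMH with a `ξ⁻¹`-strongly convex potential on convex `Θ`, if the
RWMH kernel is `(ρ, M)`-geometrically ergodic, then `ρ ≥ 1 − (1 + h/ξ)^{−d/2}`. -/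
theorem rwmh_strongly_convex_geometric_rate_lower_bound
    {d : ℕ} (hd : 0 < d) (h ξ : ℝ) (hh : 0 < h) (hξ : 0 < ξ)
    (Θ : Set (Fin d → ℝ)) (hΘne : Θ.Nonempty) (hΘconv : Convex ℝ Θ)
    (hΘmeas : MeasurableSet Θ)
    (f : (Fin d → ℝ) → ℝ) (hfm : Measurable f)
    (hsc : ConvexOn ℝ Θ (fun θ => f θ - (∑ i, θ i ^ 2) / (2 * ξ)))
    (hfint : IntegrableOn (fun θ => Real.exp (-f θ)) Θ volume)
    (hZ : 0 < ∫ x in Θ, Real.exp (-f x))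
    (ρ : ℝ) (hρ : ρ ∈ Set.Ioo (0:ℝ) 1)
    (Mf : (Fin d → ℝ) → ℝ) (hM : ∀ θ ∈ Θ, 0 < Mf θ)
    (hge : ∀ θ ∈ Θ, ∀ t : ℕ, 1 ≤ t →
      tvDist
          (iterK (mhKernel volume (logConcaveTarget Θ f) (rwProposal h d)) t θ)
          (volume.withDensity (fun x => ENNReal.ofReal (logConcaveTarget Θ f x))) ≤
        Mf θ * ρ ^ t) :
    1 - (1 + h / ξ) ^ (-(d : ℝ) / 2) ≤ ρ :=
  rwmh_strongly_convex_geometric_rate_lower_bound_general hd h ξ hh hξ Θ hΘne hΘconv hΘmeas f hfm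
    hsc hfint hZ ρ hρ Mf hge
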